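/- arXiv:2402.04706 — 6 statements merged into one kernel-verified Lean document; each statement's English description precedes it below -/
import Mathlib

section
/- Let C be a nonempty finite set, m > 1 a natural number, I a finite set, (A_i)_{i∈I} a family of subsets of C, and g : I → [0,1] with ∑_{i∈I} g(i) = 1. For ε > 0 define B = { k ∈ C : ∑{ g(i) : i ∈ I, k ∈ A_i } > 1 - ε }. Then ‖B‖ ≥ min_{i∈I} ‖A_i‖ − log_m(1/ε), where ‖X‖ = log_m(|C|/(|C|-|X|)) (interpreted as ∞ when X = C). -/
/-!
Let `B` be the set of points of `C` covered with `g`-weight more than `1 - ε`. Every point of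
`C \ B` misses sets of total weight at least `ε`, so double counting gives
`ε · |C \ B| ≤ ∑ᵢ g(i) · |C \ Aᵢ| ≤ maxᵢ |C \ Aᵢ|`. Taking `log_m` of
`|C| / |C \ B| ≥ ε · |C| / |C \ Aⱼ|` for the maximising `j` is the claim.
-/

open Finset

section

variable {α ι : Type*}

noncomputable def cobigNorm (m : ℕ) (C X : Finset α) : ℝ :=
  Real.logb m ((#C : ℝ) / ((#C : ℝ) - (#X : ℝ)))

variable [DecidableEq α]

theorem cobigNorm_eq_logb_card_sdiff {m : ℕ} {C X : Finset α} (hX : X ⊆ C) :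
    cobigNorm m C X = Real.logb m ((#C : ℝ) / (#(C \ X) : ℝ)) := by
  rw [cobigNorm, card_sdiff_of_subset hX, Nat.cast_sub (card_le_card hX)]

theorem sum_sum_filter_notMem_eq_sum_mul_card_sdiff (D : Finset α) (I : Finset ι)
    (A : ι → Finset α) (g : ι → ℝ) :
    ∑ k ∈ D, ∑ i ∈ I with k ∉ A i, g i = ∑ i ∈ I, g i * #(D \ A i) := by
  simp_rw [sum_filter]
  rw [sum_comm]
  refine sum_congr rfl fun i _ => ?_
  rw [← sum_filter, filter_notMem_eq_sdiff, sum_const, nsmul_eq_mul, mul_comm]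

theorem mul_card_sdiff_superlevel_le {C : Finset α} {I : Finset ι} {A : ι → Finset α}
    {g : ι → ℝ} (hg : ∀ i ∈ I, 0 ≤ g i) (hsum : ∑ i ∈ I, g i = 1) (ε : ℝ) {M : ℕ}
    (hM : ∀ i ∈ I, #(C \ A i) ≤ M) :
    ε * #(C \ C.filter (fun k => 1 - ε < ∑ i ∈ I with k ∈ A i, g i)) ≤ M := by
  set D := C \ C.filter (fun k => 1 - ε < ∑ i ∈ I with k ∈ A i, g i)
  have hmiss : ∀ k ∈ D, ε ≤ ∑ i ∈ I with k ∉ A i, g i := by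
    intro k hk
    have hlow : ∑ i ∈ I with k ∈ A i, g i ≤ 1 - ε := by
      simp only [D, mem_sdiff, mem_filter, not_and, not_lt] at hk
      exact hk.2 hk.1
    have hsplit := sum_filter_add_sum_filter_not I (fun i => k ∈ A i) g
    linarith
  calc ε * #D = ∑ _k ∈ D, ε := by rw [sum_const, nsmul_eq_mul, mul_comm]
    _ ≤ ∑ k ∈ D, ∑ i ∈ I with k ∉ A i, g i := sum_le_sum hmiss
    _ = ∑ i ∈ I, g i * #(D \ A i) := sum_sum_filter_notMem_eq_sum_mul_card_sdiff D I A g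
    _ ≤ ∑ i ∈ I, g i * M := by
      refine sum_le_sum fun i hi => mul_le_mul_of_nonneg_left ?_ (hg i hi)
      exact_mod_cast (card_le_card (sdiff_subset_sdiff sdiff_subset le_rfl)).trans (hM i hi)
    _ = M := by rw [← sum_mul, hsum, one_mul]

theorem cobigNorm_sub_logb_inv_le {m : ℕ} (hm : 1 < m) {C X Y : Finset α} (hX : X ⊆ C)
    (hY : Y ⊆ C) (hYC : Y ≠ C) {ε : ℝ} (hε : 0 < ε) (hcard : ε * #(C \ Y) ≤ #(C \ X)) :
    cobigNorm m C X - Real.logb m (1 / ε) ≤ cobigNorm m C Y := by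
  have hY_pos : (0 : ℝ) < #(C \ Y) := by
    exact_mod_cast card_pos.2 (sdiff_nonempty.2 fun h => hYC (hY.antisymm h))
  have hX_pos : (0 : ℝ) < #(C \ X) := (mul_pos hε hY_pos).trans_le hcard
  have hC_pos : (0 : ℝ) < #C := hY_pos.trans_le (by exact_mod_cast card_le_card sdiff_subset)
  rw [cobigNorm_eq_logb_card_sdiff hX, cobigNorm_eq_logb_card_sdiff hY, one_div,
    Real.logb_inv, sub_neg_eq_add, ← Real.logb_mul (by positivity) hε.ne']
  refine Real.logb_le_logb_of_le (by exact_mod_cast hm) (by positivity) ?_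
  rw [div_mul_eq_mul_div, div_le_div_iff₀ hX_pos hY_pos, mul_assoc]
  exact mul_le_mul_of_nonneg_left hcard hC_pos.le

end

theorem stmt5_general {α ι : Type*} [DecidableEq α] (C : Finset α) (m : ℕ)
    (hm : 1 < m)
    (I : Finset ι) (hI : I.Nonempty) (A : ι → Finset α)
    (hA : ∀ i ∈ I, A i ⊆ C)
    (g : ι → ℝ) (hg : ∀ i ∈ I, g i ∈ Set.Icc (0 : ℝ) 1) (hsum : ∑ i ∈ I, g i = 1)
    (ε : ℝ) (hε : 0 < ε) :
    C.filter (fun k => 1 - ε < ∑ i ∈ I.filter (fun i => k ∈ A i), g i) = C ∨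
    (I.image (fun i =>
        Real.logb m ((C.card : ℝ) / ((C.card : ℝ) - ((A i).card : ℝ))))).min' (hI.image _)
      - Real.logb m (1 / ε) ≤
    Real.logb m ((C.card : ℝ) / ((C.card : ℝ) -
      ((C.filter (fun k => 1 - ε < ∑ i ∈ I.filter (fun i => k ∈ A i), g i)).card : ℝ))) := by
  set B := C.filter (fun k => 1 - ε < ∑ i ∈ I with k ∈ A i, g i)
  refine or_iff_not_imp_left.2 fun hBC => ?_
  obtain ⟨j, hj, hjmax⟩ := I.exists_max_image (fun i => #(C \ A i)) hI
  have hcount : ε * #(C \ B) ≤ #(C \ A j) :=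
    mul_card_sdiff_superlevel_le (fun i hi => (hg i hi).1) hsum ε hjmax
  have hmin : (I.image fun i => cobigNorm m C (A i)).min' (hI.image _) ≤ cobigNorm m C (A j) :=
    min'_le _ _ (mem_image_of_mem _ hj)
  have hnorm := cobigNorm_sub_logb_inv_le hm (hA j hj) (filter_subset _ C) hBC hε hcount
  exact (sub_le_sub_right hmin _).trans hnorm

/-- Co-bigness of the norm `‖X‖ = log_m(|C|/(|C|-|X|))` (with `‖C‖ = ∞`, so the case
`B = C` of the conclusion is stated as a separate disjunct): for subsets `A_i ⊆ C`
(all proper, so their norms are real), weights `g` summing to `1`, and `ε > 0`,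
the set `B = {k ∈ C : ∑{g(i) : i ∈ I, k ∈ A_i} > 1-ε}` satisfies
`‖B‖ ≥ min_i ‖A_i‖ − log_m(1/ε)`. -/
theorem stmt5 {α ι : Type*} [DecidableEq α] (C : Finset α) (m : ℕ)
    (hC : C.Nonempty) (hm : 1 < m)
    (I : Finset ι) (hI : I.Nonempty) (A : ι → Finset α)
    (hA : ∀ i ∈ I, A i ⊆ C) (hAprop : ∀ i ∈ I, A i ≠ C)
    (g : ι → ℝ) (hg : ∀ i ∈ I, g i ∈ Set.Icc (0 : ℝ) 1) (hsum : ∑ i ∈ I, g i = 1)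
    (ε : ℝ) (hε : 0 < ε) :
    C.filter (fun k => 1 - ε < ∑ i ∈ I.filter (fun i => k ∈ A i), g i) = C ∨
    (I.image (fun i =>
        Real.logb m ((C.card : ℝ) / ((C.card : ℝ) - ((A i).card : ℝ))))).min' (hI.image _)
      - Real.logb m (1 / ε) ≤
    Real.logb m ((C.card : ℝ) / ((C.card : ℝ) -
      ((C.filter (fun k => 1 - ε < ∑ i ∈ I.filter (fun i => k ∈ A i), g i)).card : ℝ))) :=
  stmt5_general C m hm I hI A hA g hg hsum ε hε
end

section
/- Let C be a nonempty finite set, m > 1 a natural number, I a finite set, (A_i)_{i∈I} subsets of C, g : I → [0,1] with ∑g(i)=1, ε > 0, and x = min_i ‖A_i‖ finite. Then the set B = { k ∈ C : ∑{g(i) : k ∈ A_i} > 1-ε } satisfies |B| ≥ |C|(1 − m^{-x}/ε). -/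
/-!
Each `A i` has `‖A i‖ ≥ x`, i.e. misses at most a fraction `m^{-x}` of `C`, so the `g`-weighted
sum of the `|A i|` is at least `|C|(1 - m^{-x})`. Double counting turns this into
`∑_{k ∈ C} f k` with `f k = ∑{g i : k ∈ A i} ≤ 1`, and a reverse Markov inequality for `f`
at level `1 - ε` bounds from below the number of points where `f` exceeds that level.
-/

open Finset

/-- For `a = c` the junk value `c / 0 = 0` turns the hypothesis into `x ≤ 0`, and the conclusion
into `0 ≤ c * m ^ (-x)`. -/
lemma sub_le_mul_rpow_neg_of_le_logb {m a c x : ℝ} (hm : 1 < m) (ha : 0 ≤ a) (hac : a ≤ c)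
    (hx : x ≤ Real.logb m (c / (c - a))) : c - a ≤ c * m ^ (-x) := by
  have hmpos : 0 < m := zero_lt_one.trans hm
  rcases hac.eq_or_lt with rfl | hac
  · rw [sub_self]
    exact mul_nonneg ha (Real.rpow_nonneg hmpos.le _)
  have hc : 0 < c := ha.trans_lt hac
  have hca : 0 < c - a := sub_pos.mpr hac
  calc c - a = c * m ^ (-Real.logb m (c / (c - a))) := by
        rw [Real.rpow_neg hmpos.le, Real.rpow_logb hmpos hm.ne' (div_pos hc hca), inv_div,
          mul_div_cancel₀ _ hc.ne']
    _ ≤ c * m ^ (-x) :=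
        mul_le_mul_of_nonneg_left (Real.rpow_le_rpow_of_exponent_le hm.le (neg_le_neg hx)) hc.le

lemma sum_sum_filter_mem_eq_sum_mul_card {α ι : Type*} [DecidableEq α] (C : Finset α)
    (I : Finset ι) (A : ι → Finset α) (hA : ∀ i ∈ I, A i ⊆ C) (g : ι → ℝ) :
    ∑ k ∈ C, ∑ i ∈ I.filter (fun i => k ∈ A i), g i = ∑ i ∈ I, g i * (A i).card := by
  simp_rw [sum_filter]
  rw [sum_comm]
  refine sum_congr rfl fun i hi => ?_
  rw [← sum_filter, sum_const, filter_mem_eq_inter, inter_eq_right.mpr (hA i hi), nsmul_eq_mul,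
    mul_comm]

lemma sum_sub_card_mul_le_card_filter_lt_mul {α : Type*} (C : Finset α) (f : α → ℝ)
    (hf : ∀ k ∈ C, f k ≤ 1) (δ : ℝ) :
    ∑ k ∈ C, f k - C.card * δ ≤ (C.filter (fun k => δ < f k)).card * (1 - δ) := by
  have hbig : ∑ k ∈ C.filter (fun k => δ < f k), f k ≤ (C.filter (fun k => δ < f k)).card :=
    (sum_le_card_nsmul _ _ 1 fun k hk => hf k (mem_filter.mp hk).1).trans_eq (by simp)
  have hsmall : ∑ k ∈ C.filter (fun k => ¬δ < f k), f k
      ≤ (C.filter (fun k => ¬δ < f k)).card * δ :=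
    (sum_le_card_nsmul _ _ δ fun k hk => not_lt.mp (mem_filter.mp hk).2).trans_eq
      (nsmul_eq_mul _ _)
  have hcard : ((C.filter (fun k => δ < f k)).card : ℝ) + (C.filter (fun k => ¬δ < f k)).card
      = C.card := by
    exact_mod_cast card_filter_add_card_filter_not (s := C) (fun k => δ < f k)
  rw [← sum_filter_add_sum_filter_not C (fun k => δ < f k), ← hcard]
  linarith

theorem stmt7_general {α ι : Type*} [DecidableEq α] (C : Finset α) (m : ℕ)
    (hm : 1 < m)
    (I : Finset ι) (hI : I.Nonempty) (A : ι → Finset α)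
    (hA : ∀ i ∈ I, A i ⊆ C)
    (g : ι → ℝ) (hg : ∀ i ∈ I, g i ∈ Set.Icc (0 : ℝ) 1) (hsum : ∑ i ∈ I, g i = 1)
    (ε : ℝ) (hε : 0 < ε) :
    (C.card : ℝ) * (1 - (m : ℝ) ^
        (-( (I.image (fun i =>
            Real.logb m ((C.card : ℝ) / ((C.card : ℝ) - ((A i).card : ℝ))))).min'
              (hI.image _))) / ε) ≤
      ((C.filter (fun k => 1 - ε < ∑ i ∈ I.filter (fun i => k ∈ A i), g i)).card : ℝ) := by
  set x := (I.image fun i => Real.logb m ((C.card : ℝ) / (C.card - (A i).card))).min' (hI.image _)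
  set t := (m : ℝ) ^ (-x)
  have hmiss : ∀ i ∈ I, (C.card : ℝ) - (A i).card ≤ C.card * t := fun i hi =>
    sub_le_mul_rpow_neg_of_le_logb (by exact_mod_cast hm) (Nat.cast_nonneg _)
      (by exact_mod_cast card_le_card (hA i hi)) (min'_le _ _ (mem_image_of_mem _ hi))
  have hweighted : C.card * (1 - t) ≤ ∑ i ∈ I, g i * (A i).card :=
    calc (C.card : ℝ) * (1 - t) = ∑ i ∈ I, g i * (C.card * (1 - t)) := by
          rw [← sum_mul, hsum, one_mul]
      _ ≤ ∑ i ∈ I, g i * (A i).card := sum_le_sum fun i hi =>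
          mul_le_mul_of_nonneg_left (by linarith [hmiss i hi]) (hg i hi).1
  have hf : ∀ k ∈ C, ∑ i ∈ I.filter (fun i => k ∈ A i), g i ≤ 1 := fun k _ =>
    hsum ▸ sum_le_sum_of_subset_of_nonneg (filter_subset _ _) fun i hi _ => (hg i hi).1
  have hmarkov := sum_sub_card_mul_le_card_filter_lt_mul C _ hf (1 - ε)
  rw [sum_sum_filter_mem_eq_sum_mul_card C I A hA g, sub_sub_cancel] at hmarkov
  rw [mul_one_sub, mul_div_assoc', sub_le_iff_le_add, ← sub_le_iff_le_add', le_div_iff₀ hε]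
  linarith

/-- Quantitative core of co-bigness: with `x = min_i ‖A_i‖` finite (all `A_i` proper),
the set `B = {k ∈ C : ∑{g(i) : k ∈ A_i} > 1-ε}` satisfies `|B| ≥ |C|(1 − m^{-x}/ε)`. -/
theorem stmt7 {α ι : Type*} [DecidableEq α] (C : Finset α) (m : ℕ)
    (hC : C.Nonempty) (hm : 1 < m)
    (I : Finset ι) (hI : I.Nonempty) (A : ι → Finset α)
    (hA : ∀ i ∈ I, A i ⊆ C) (hAprop : ∀ i ∈ I, A i ≠ C)
    (g : ι → ℝ) (hg : ∀ i ∈ I, g i ∈ Set.Icc (0 : ℝ) 1) (hsum : ∑ i ∈ I, g i = 1)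
    (ε : ℝ) (hε : 0 < ε) :
    (C.card : ℝ) * (1 - (m : ℝ) ^
        (-( (I.image (fun i =>
            Real.logb m ((C.card : ℝ) / ((C.card : ℝ) - ((A i).card : ℝ))))).min'
              (hI.image _))) / ε) ≤
      ((C.filter (fun k => 1 - ε < ∑ i ∈ I.filter (fun i => k ∈ A i), g i)).card : ℝ) :=
  stmt7_general C m hm I hI A hA g hg hsum ε hε
end

section
/- Let K be a nonempty set, B a Boolean subalgebra of the powerset of K (a field of sets over K), and Ξ a finitely additive probability measure on B such that every finite set in B has Ξ-measure zero. Then Ξ has the uniform approximation property: for every ε > 0 and every finite partition P ⊆ B of K into pairwise disjoint sets with union K, there is a nonempty finite u ⊆ K such that ||u ∩ A|/|u| − Ξ(A)| < ε for all A ∈ P. -/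
open scoped Classical

/-!
Take a large `N` and, from each part `A` of the partition, a set of `⌈Ξ(A) N⌉` points of `A`;
this is possible because a part of positive measure is infinite, and a part of measure zero
needs no points. The union `u` of these samples meets `A` in exactly `⌈Ξ(A) N⌉` points, and
`N ≤ |u| ≤ N + |P|`, so every relative frequency is within `(|P| + 1) / N` of `Ξ(A)`.
-/

open Finset

section FieldOfSets

variable {K : Type*} {S : Set (Set K)}

theorem sUnion_finset_mem (hSempty : ∅ ∈ S) (hSunion : ∀ A ∈ S, ∀ B ∈ S, A ∪ B ∈ S)
    {Q : Finset (Set K)} (hQ : ∀ A ∈ Q, A ∈ S) : ⋃₀ (Q : Set (Set K)) ∈ S := by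
  induction Q using Finset.induction_on with
  | empty => simpa using hSempty
  | insert A Q _ ih =>
    rw [coe_insert, Set.sUnion_insert]
    exact hSunion _ (hQ A (mem_insert_self A Q)) _
      (ih fun B hB => hQ B (mem_insert_of_mem hB))

theorem apply_sUnion_finset_eq_sum {M : Type*} [AddCommMonoid M] {f : Set K → M}
    (hSempty : ∅ ∈ S) (hSunion : ∀ A ∈ S, ∀ B ∈ S, A ∪ B ∈ S) (hf0 : f ∅ = 0)
    (hadd : ∀ A ∈ S, ∀ B ∈ S, Disjoint A B → f (A ∪ B) = f A + f B)
    {Q : Finset (Set K)} (hQ : ∀ A ∈ Q, A ∈ S) (hQdisj : (Q : Set (Set K)).Pairwise Disjoint) :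
    f (⋃₀ (Q : Set (Set K))) = ∑ A ∈ Q, f A := by
  induction Q using Finset.induction_on with
  | empty => simpa using hf0
  | insert A Q hAQ ih =>
    have hQS : ∀ B ∈ Q, B ∈ S := fun B hB => hQ B (mem_insert_of_mem hB)
    rw [coe_insert, Set.pairwise_insert_of_symm] at hQdisj
    have hdisj : Disjoint A (⋃₀ (Q : Set (Set K))) :=
      Set.disjoint_sUnion_right.mpr fun B hB => hQdisj.2 B hB (ne_of_mem_of_not_mem hB hAQ).symm
    rw [coe_insert, Set.sUnion_insert, sum_insert hAQ,
      hadd A (hQ A (mem_insert_self A Q)) _ (sUnion_finset_mem hSempty hSunion hQS) hdisj,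
      ih hQS hQdisj.1]

end FieldOfSets

section Sampling

variable {K : Type*} {P : Finset (Set K)} {t : Set K → Finset K}

theorem filter_mem_biUnion_eq (hPdisj : (P : Set (Set K)).Pairwise Disjoint)
    (ht : ∀ A ∈ P, ↑(t A) ⊆ A) {A : Set K} (hA : A ∈ P) :
    (P.biUnion t).filter (· ∈ A) = t A := by
  ext x
  simp only [mem_filter, mem_biUnion]
  constructor
  · rintro ⟨⟨B, hB, hxB⟩, hxA⟩
    by_contra hxt
    have hAB : A ≠ B := by rintro rfl; exact hxt hxB
    exact Set.disjoint_left.mp (hPdisj hA hB hAB) hxA (ht B hB hxB)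
  · exact fun hx => ⟨⟨A, hA, hx⟩, ht A hA hx⟩

theorem card_biUnion_eq_sum (hPdisj : (P : Set (Set K)).Pairwise Disjoint)
    (ht : ∀ A ∈ P, ↑(t A) ⊆ A) : #(P.biUnion t) = ∑ A ∈ P, #(t A) :=
  card_biUnion fun A hA B hB hAB => Finset.disjoint_coe.mp <|
    (hPdisj hA hB hAB).mono (ht A hA) (ht B hB)

end Sampling

theorem exists_subset_card_eq_ceil {K : Type*} {A : Set K} {x : ℝ}
    (hA : 0 < x → A.Infinite) (N : ℕ) : ∃ t : Finset K, ↑t ⊆ A ∧ #t = ⌈x * N⌉₊ := by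
  by_cases hx : 0 < x
  · exact (hA hx).exists_subset_card_eq _
  · refine ⟨∅, by simp, ?_⟩
    rw [card_empty, eq_comm, Nat.ceil_eq_zero]
    exact mul_nonpos_of_nonpos_of_nonneg (not_lt.mp hx) N.cast_nonneg

theorem sum_ceil_mul_mem_Icc {ι : Type*} {s : Finset ι} {w : ι → ℝ}
    (hw0 : ∀ i ∈ s, 0 ≤ w i) (hw1 : ∑ i ∈ s, w i = 1) (N : ℝ) (hN : 0 ≤ N) :
    ∑ i ∈ s, (⌈w i * N⌉₊ : ℝ) ∈ Set.Icc N (N + #s) := by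
  have hsum : ∑ i ∈ s, w i * N = N := by rw [← sum_mul, hw1, one_mul]
  constructor
  · calc N = ∑ i ∈ s, w i * N := hsum.symm
      _ ≤ ∑ i ∈ s, (⌈w i * N⌉₊ : ℝ) := sum_le_sum fun i _ => Nat.le_ceil _
  · calc ∑ i ∈ s, (⌈w i * N⌉₊ : ℝ) ≤ ∑ i ∈ s, (w i * N + 1) :=
          sum_le_sum fun i hi => (Nat.ceil_lt_add_one (mul_nonneg (hw0 i hi) hN)).le
      _ = N + #s := by rw [sum_add_distrib, hsum, sum_const, nsmul_one]

theorem abs_div_sub_lt_of_ceil_bounds {c M x N p ε : ℝ} (hN : 0 < N) (hx0 : 0 ≤ x) (hx1 : x ≤ 1)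
    (hcl : x * N ≤ c) (hcu : c < x * N + 1) (hMl : N ≤ M) (hMu : M ≤ N + p)
    (hNε : p + 1 < ε * N) : |c / M - x| < ε := by
  have hM : 0 < M := hN.trans_le hMl
  have hp : 0 ≤ p := by linarith
  have hε : 0 < ε := pos_of_mul_pos_left (by linarith) hN.le
  have hxMN : x * N ≤ x * M := mul_le_mul_of_nonneg_left hMl hx0
  have hxMp : x * M ≤ x * N + p := by nlinarith
  have hεMN : ε * N ≤ ε * M := mul_le_mul_of_nonneg_left hMl hε.le
  have hxM : |c - x * M| < ε * M := by
    rw [abs_lt]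
    constructor <;> linarith
  rwa [← mul_div_cancel_right₀ x hM.ne', ← sub_div, abs_div, abs_of_pos hM, div_lt_iff₀ hM]

theorem exists_finset_abs_card_filter_div_card_sub_lt {K : Type*} {P : Finset (Set K)}
    {w : Set K → ℝ} (hPdisj : (P : Set (Set K)).Pairwise Disjoint) (hw0 : ∀ A ∈ P, 0 ≤ w A)
    (hw1 : ∑ A ∈ P, w A = 1) (hinf : ∀ A ∈ P, 0 < w A → A.Infinite) {ε : ℝ} (hε : 0 < ε) :
    ∃ u : Finset K, u.Nonempty ∧ ∀ A ∈ P,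
      |(#(u.filter (· ∈ A)) : ℝ) / #u - w A| < ε := by
  obtain ⟨N, hN⟩ := exists_nat_gt ((#P + 1) / ε)
  rw [div_lt_iff₀ hε, mul_comm] at hN
  have hNpos : (0 : ℝ) < N := pos_of_mul_pos_right (hN.trans' (by positivity)) hε.le
  choose! t ht htcard using fun A hA => exists_subset_card_eq_ceil (hinf A hA) N
  set u := P.biUnion t
  have hucard : (#u : ℝ) ∈ Set.Icc (N : ℝ) (N + #P) := by
    rw [card_biUnion_eq_sum hPdisj ht, Nat.cast_sum, sum_congr rfl fun A hA => by rw [htcard A hA]]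
    exact sum_ceil_mul_mem_Icc hw0 hw1 N hNpos.le
  refine ⟨u, card_pos.mp (Nat.cast_pos.mp (hNpos.trans_le hucard.1)), fun A hA => ?_⟩
  rw [filter_mem_biUnion_eq hPdisj ht hA, htcard A hA]
  have hwA : 0 ≤ w A * N := mul_nonneg (hw0 A hA) hNpos.le
  exact abs_div_sub_lt_of_ceil_bounds hNpos (hw0 A hA)
    (hw1 ▸ single_le_sum hw0 hA) (Nat.le_ceil _) (Nat.ceil_lt_add_one hwA)
    hucard.1 hucard.2 hN

theorem stmt9_general {K : Type*} (S : Set (Set K)) (Ξ : Set K → ℝ)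
    (hSempty : (∅ : Set K) ∈ S)
    (hSunion : ∀ A ∈ S, ∀ B ∈ S, A ∪ B ∈ S)
    (h0 : Ξ ∅ = 0) (h1 : Ξ Set.univ = 1)
    (hrange : ∀ A ∈ S, Ξ A ∈ Set.Icc (0 : ℝ) 1)
    (hadd : ∀ A ∈ S, ∀ B ∈ S, Disjoint A B → Ξ (A ∪ B) = Ξ A + Ξ B)
    (hfin : ∀ A ∈ S, A.Finite → Ξ A = 0)
    (ε : ℝ) (hε : 0 < ε)
    (P : Finset (Set K)) (hPS : ∀ A ∈ P, A ∈ S)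
    (hPdisj : ∀ A ∈ P, ∀ B ∈ P, A ≠ B → Disjoint A B)
    (hPcover : ⋃₀ ↑P = (Set.univ : Set K)) :
    ∃ u : Finset K, u.Nonempty ∧ ∀ A ∈ P,
      |((u.filter (fun k => k ∈ A)).card : ℝ) / (u.card : ℝ) - Ξ A| < ε := by
  have hPdisj' : (P : Set (Set K)).Pairwise Disjoint := fun A hA B hB => hPdisj A hA B hB
  have hsum : ∑ A ∈ P, Ξ A = 1 := by
    rw [← apply_sUnion_finset_eq_sum hSempty hSunion h0 hadd hPS hPdisj', hPcover, h1]
  have hinf : ∀ A ∈ P, 0 < Ξ A → A.Infinite := fun A hA hpos hfinite =>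
    hpos.ne' (hfin A (hPS A hA) hfinite)
  exact exists_finset_abs_card_filter_div_card_sub_lt hPdisj' (fun A hA => (hrange A (hPS A hA)).1)
    hsum hinf hε

/-- Any finitely additive probability measure on a field of sets over `K` giving all
finite sets measure zero has the uniform approximation property. -/
theorem stmt9 {K : Type*} (hK : Nonempty K) (S : Set (Set K)) (Ξ : Set K → ℝ)
    (hSempty : (∅ : Set K) ∈ S) (hSuniv : (Set.univ : Set K) ∈ S)
    (hSunion : ∀ A ∈ S, ∀ B ∈ S, A ∪ B ∈ S) (hScompl : ∀ A ∈ S, Aᶜ ∈ S)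
    (h0 : Ξ ∅ = 0) (h1 : Ξ Set.univ = 1)
    (hrange : ∀ A ∈ S, Ξ A ∈ Set.Icc (0 : ℝ) 1)
    (hadd : ∀ A ∈ S, ∀ B ∈ S, Disjoint A B → Ξ (A ∪ B) = Ξ A + Ξ B)
    (hfin : ∀ A ∈ S, A.Finite → Ξ A = 0)
    (ε : ℝ) (hε : 0 < ε)
    (P : Finset (Set K)) (hPS : ∀ A ∈ P, A ∈ S)
    (hPdisj : ∀ A ∈ P, ∀ B ∈ P, A ≠ B → Disjoint A B)
    (hPcover : ⋃₀ ↑P = (Set.univ : Set K)) :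
    ∃ u : Finset K, u.Nonempty ∧ ∀ A ∈ P,
      |((u.filter (fun k => k ∈ A)).card : ℝ) / (u.card : ℝ) - Ξ A| < ε :=
  stmt9_general S Ξ hSempty hSunion h0 h1 hrange hadd hfin ε hε P hPS hPdisj hPcover
end

section
/- Let C be a nonempty finite set, m > 1 natural, and let A_0, …, A_{k-1} ⊆ C each satisfy ‖A_j‖ ≥ 1 + log_m k, where ‖X‖ = log_m(|C|/(|C|-|X|)) (with ‖C‖ = ∞). Then ‖⋂_{j<k} A_j‖ ≥ 1; in particular the intersection is nonempty. -/
/-! A set `X ⊆ C` has `‖X‖ ≥ log_m x` exactly when its complement has at most `|C| / x`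
elements. So each `C \ A_j` has at most `|C| / (m k)` elements, and the complement of the
intersection, being the union of these `k` complements, has at most `|C| / m < |C|`. -/

open Finset

lemma Real.logb_le_logb_div_sub_iff {b x c a : ℝ} (hb : 1 < b) (hx : 0 < x) (ha : 0 ≤ a)
    (hac : a < c) : Real.logb b x ≤ Real.logb b (c / (c - a)) ↔ c - a ≤ c / x := by
  have hd : 0 < c - a := sub_pos.mpr hac
  have hc : 0 < c := ha.trans_lt hac
  rw [Real.logb_le_logb hb hx (by positivity), le_div_iff₀ hd, le_div_iff₀ hx, mul_comm]

namespace Finset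

variable {α ι : Type*} [DecidableEq α]

lemma card_sdiff_inf'_le_sum (C : Finset α) (s : Finset ι) (hs : s.Nonempty) (A : ι → Finset α) :
    #(C \ s.inf' hs A) ≤ ∑ j ∈ s, #(C \ A j) := by
  refine (card_le_card fun x hx => ?_).trans card_biUnion_le
  simp only [mem_sdiff, mem_inf', not_forall] at hx
  obtain ⟨hxC, j, hj, hxA⟩ := hx
  exact mem_biUnion.mpr ⟨j, hj, mem_sdiff.mpr ⟨hxC, hxA⟩⟩

lemma eq_or_logb_le_iff_card_sdiff_le {A C : Finset α} (hAC : A ⊆ C) {b x : ℝ} (hb : 1 < b)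
    (hx : 0 < x) :
    (A = C ∨ Real.logb b x ≤ Real.logb b (#C / (#C - #A))) ↔ (#(C \ A) : ℝ) ≤ #C / x := by
  rw [cast_card_sdiff hAC]
  rcases eq_or_ne A C with rfl | hne
  · simpa using div_nonneg (Nat.cast_nonneg _) hx.le
  · have hlt : (#A : ℝ) < #C := by exact_mod_cast card_lt_card (hAC.ssubset_of_ne hne)
    simp only [hne, false_or]
    exact Real.logb_le_logb_div_sub_iff hb hx (Nat.cast_nonneg _) hlt

end Finset

/-- k-linkedness core: if `‖A_j‖ ≥ 1 + log_m k` for all `j < k` (with `‖C‖ = ∞`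
handled by disjunction), then `‖⋂_{j<k} A_j‖ ≥ 1`; in particular the intersection
is nonempty. -/
theorem stmt12 {α : Type*} [DecidableEq α] (C : Finset α) (m : ℕ)
    (hC : C.Nonempty) (hm : 1 < m) (k : ℕ) (hk : 0 < k) (A : ℕ → Finset α)
    (hA : ∀ j < k, A j ⊆ C)
    (hnorm : ∀ j < k, A j = C ∨
      1 + Real.logb m (k : ℝ) ≤
        Real.logb m ((C.card : ℝ) / ((C.card : ℝ) - ((A j).card : ℝ)))) :
    ((Finset.range k).inf' ⟨0, Finset.mem_range.mpr hk⟩ A = C ∨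
      1 ≤ Real.logb m ((C.card : ℝ) /
        ((C.card : ℝ) - (((Finset.range k).inf' ⟨0, Finset.mem_range.mpr hk⟩ A).card : ℝ)))) ∧
    ((Finset.range k).inf' ⟨0, Finset.mem_range.mpr hk⟩ A).Nonempty := by
  set I := (range k).inf' ⟨0, mem_range.mpr hk⟩ A
  have hm1 : (1 : ℝ) < m := by exact_mod_cast hm
  have hm0 : (0 : ℝ) < m := by positivity
  have hk0 : (0 : ℝ) < k := by exact_mod_cast hk
  have hC0 : (0 : ℝ) < #C := by exact_mod_cast hC.card_pos
  have hIC : I ⊆ C := (inf'_le A (mem_range.mpr hk)).trans (hA 0 hk)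
  have hAj : ∀ j ∈ range k, (#(C \ A j) : ℝ) ≤ #C / (m * k) := fun j hj => by
    rw [mem_range] at hj
    rw [← eq_or_logb_le_iff_card_sdiff_le (hA j hj) hm1 (by positivity),
      Real.logb_mul hm0.ne' hk0.ne', Real.logb_self_eq_one hm1]
    exact hnorm j hj
  have hI : (#(C \ I) : ℝ) ≤ #C / m := calc
    (#(C \ I) : ℝ) ≤ ∑ j ∈ range k, (#(C \ A j) : ℝ) := by
      exact_mod_cast card_sdiff_inf'_le_sum C _ _ A
    _ ≤ k * (#C / (m * k)) := by simpa using sum_le_sum hAj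
    _ = #C / m := by field_simp
  refine ⟨?_, card_pos.mp ?_⟩
  · rw [← Real.logb_self_eq_one hm1]
    exact (eq_or_logb_le_iff_card_sdiff_le hIC hm1 hm0).mpr hI
  · have : (#C : ℝ) / m < #C := div_lt_self hC0 hm1
    rw [cast_card_sdiff hIC] at hI
    exact_mod_cast (by linarith : (0 : ℝ) < #I)
end

section
/- Let K be a nonempty set, Ξ a finitely additive probability measure on P(K), I a finite set, and for each i ∈ I let f_i : K → [0,1] with ∫_K f_i dΞ ≥ 1 − ε_i for some ε_i ∈ (0,1). Then for any ε' > 0 and any finite partition P of K, if Ξ has the uniform approximation property, there is a nonempty finite u ⊆ K such that ||u ∩ A|/|u| − Ξ(A)| < ε' for all A ∈ P and (1/|u|) ∑_{k∈u} f_i(k) > 1 − ε_i − ε' for all i ∈ I. -/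
/-!
For each `i`, the supremum defining the lower integral provides a partition `Rᵢ` whose lower
sum of `fᵢ` exceeds `1 - εᵢ - ε'/2`. Let `Q` be a common refinement of `P` and all `Rᵢ`, and
sample `Q` to precision `δ = ε' / (2 (|Q| + 1))`, so that `|Q| δ < ε'/2`. Sample frequencies
are finitely additive like `Ξ`, so on a piece of `P` the errors add up to at most `|Q| δ`.
The sample mean of `fᵢ` dominates its lower sum over `Q` against the sample frequencies, which
is within `|Q| δ` of the `Ξ`-lower sum over `Q`; refining only increases lower sums, so the
latter is at least the lower sum over `Rᵢ`.
-/

open scoped Classical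

/-- `P` is a finite partition of `K` into pairwise disjoint sets with union `K`. -/
def IsFinPartition {K : Type*} (P : Finset (Set K)) : Prop :=
  (∀ A ∈ P, ∀ B ∈ P, A ≠ B → Disjoint A B) ∧ ⋃₀ ↑P = (Set.univ : Set K)

/-- The lower `Ξ`-integral of `f`: the supremum of lower Riemann-type sums over
finite partitions of `K`. For bounded `f` and `Ξ` on the full powerset this agrees
with the `Ξ`-integral. -/
noncomputable def lowerInt {K : Type*} (Ξ : Set K → ℝ) (f : K → ℝ) : ℝ :=
  sSup {x : ℝ | ∃ P : Finset (Set K), IsFinPartition P ∧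
    x = ∑ A ∈ P, sInf (f '' A) * Ξ A}

section

open Finset

variable {K : Type*}

noncomputable def lowerSum (Ξ : Set K → ℝ) (f : K → ℝ) (P : Finset (Set K)) : ℝ :=
  ∑ A ∈ P, sInf (f '' A) * Ξ A

noncomputable def sampleFreq (u : Finset K) (A : Set K) : ℝ :=
  ((u.filter (fun k => k ∈ A)).card : ℝ) / (u.card : ℝ)

def IsFinAdditive (μ : Set K → ℝ) : Prop :=
  μ ∅ = 0 ∧ ∀ A B : Set K, Disjoint A B → μ (A ∪ B) = μ A + μ B

def Refines (Q P : Finset (Set K)) : Prop :=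
  ∀ B ∈ Q, ∃ A ∈ P, B ⊆ A

lemma Refines.trans {P Q R : Finset (Set K)} (hRQ : Refines R Q) (hQP : Refines Q P) :
    Refines R P := fun C hC =>
  let ⟨B, hB, hCB⟩ := hRQ C hC
  let ⟨A, hA, hBA⟩ := hQP B hB
  ⟨A, hA, hCB.trans hBA⟩

noncomputable def partitionInf (P Q : Finset (Set K)) : Finset (Set K) :=
  (P ×ˢ Q).image fun p => p.1 ∩ p.2

lemma refines_partitionInf_left (P Q : Finset (Set K)) : Refines (partitionInf P Q) P := by
  intro C hC
  obtain ⟨⟨A, B⟩, hAB, rfl⟩ := mem_image.1 hC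
  exact ⟨A, (mem_product.1 hAB).1, Set.inter_subset_left⟩

lemma refines_partitionInf_right (P Q : Finset (Set K)) : Refines (partitionInf P Q) Q := by
  intro C hC
  obtain ⟨⟨A, B⟩, hAB, rfl⟩ := mem_image.1 hC
  exact ⟨B, (mem_product.1 hAB).2, Set.inter_subset_right⟩

namespace IsFinPartition

lemma exists_mem {P : Finset (Set K)} (hP : IsFinPartition P) (k : K) : ∃ A ∈ P, k ∈ A := by
  have hk : k ∈ ⋃₀ (P : Set (Set K)) := hP.2 ▸ Set.mem_univ k
  simpa using hk

lemma singleton_univ : IsFinPartition ({Set.univ} : Finset (Set K)) :=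
  ⟨by simp, by simp⟩

lemma inf {P Q : Finset (Set K)} (hP : IsFinPartition P) (hQ : IsFinPartition Q) :
    IsFinPartition (partitionInf P Q) := by
  refine ⟨?_, Set.eq_univ_of_forall fun k => ?_⟩
  · simp only [partitionInf, mem_image, mem_product]
    rintro _ ⟨⟨A, B⟩, ⟨hA, hB⟩, rfl⟩ _ ⟨⟨A', B'⟩, ⟨hA', hB'⟩, rfl⟩ hne
    by_cases hAA' : A = A'
    · subst hAA'
      have hBB' : B ≠ B' := by rintro rfl; exact hne rfl
      exact (hQ.1 B hB B' hB' hBB').mono Set.inter_subset_right Set.inter_subset_right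
    · exact (hP.1 A hA A' hA' hAA').mono Set.inter_subset_left Set.inter_subset_left
  · obtain ⟨A, hA, hkA⟩ := hP.exists_mem k
    obtain ⟨B, hB, hkB⟩ := hQ.exists_mem k
    exact ⟨A ∩ B, by simpa [partitionInf] using ⟨A, hA, B, hB, rfl⟩, hkA, hkB⟩

lemma exists_refines (S : Finset (Finset (Set K))) (hS : ∀ P ∈ S, IsFinPartition P) :
    ∃ Q, IsFinPartition Q ∧ ∀ P ∈ S, Refines Q P := by
  induction S using Finset.induction_on with
  | empty => exact ⟨{Set.univ}, singleton_univ, by simp⟩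
  | insert P S _ ih =>
    obtain ⟨Q, hQ, hQS⟩ := ih fun R hR => hS R (mem_insert_of_mem hR)
    refine ⟨partitionInf P Q, (hS P (mem_insert_self P S)).inf hQ, fun R hR => ?_⟩
    rcases mem_insert.1 hR with rfl | hR
    · exact refines_partitionInf_left R Q
    · exact (refines_partitionInf_right P Q).trans (hQS R hR)

lemma inter_eq_empty {P : Finset (Set K)} (hP : IsFinPartition P) {A A₀ B : Set K}
    (hA : A ∈ P) (hA₀ : A₀ ∈ P) (hB : B ⊆ A₀) (hne : A ≠ A₀) : A ∩ B = ∅ :=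
  Set.disjoint_iff_inter_eq_empty.1 ((hP.1 A hA A₀ hA₀ hne).mono_right hB)

lemma sum_inter_eq {P : Finset (Set K)} (hP : IsFinPartition P) {g : Set K → ℝ} (hg : g ∅ = 0)
    {A₀ B : Set K} (hA₀ : A₀ ∈ P) (hB : B ⊆ A₀) : ∑ A ∈ P, g (A ∩ B) = g B := by
  rw [sum_eq_single_of_mem A₀ hA₀ fun A hA hne => by rw [hP.inter_eq_empty hA hA₀ hB hne, hg],
    Set.inter_eq_right.2 hB]

end IsFinPartition

lemma sInf_image_mem_Icc {f : K → ℝ} (hf : ∀ k, f k ∈ Set.Icc (0 : ℝ) 1) (A : Set K) :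
    sInf (f '' A) ∈ Set.Icc (0 : ℝ) 1 := by
  have hbdd : BddBelow (Set.range f) := ⟨0, by rintro _ ⟨k, rfl⟩; exact (hf k).1⟩
  refine ⟨Real.sInf_nonneg (by rintro _ ⟨k, -, rfl⟩; exact (hf k).1), ?_⟩
  rcases A.eq_empty_or_nonempty with rfl | ⟨k, hk⟩
  · simp
  · exact (csInf_le (hbdd.mono (Set.image_subset_range f A)) ⟨k, hk, rfl⟩).trans (hf k).2

lemma lowerSum_le_add {μ ν : Set K → ℝ} {f : K → ℝ}
    (hf : ∀ k, f k ∈ Set.Icc (0 : ℝ) 1) {Q : Finset (Set K)} {δ : ℝ}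
    (hδ : ∀ B ∈ Q, |μ B - ν B| ≤ δ) :
    lowerSum μ f Q ≤ lowerSum ν f Q + Q.card * δ := by
  have hterm : ∀ B ∈ Q, sInf (f '' B) * μ B ≤ sInf (f '' B) * ν B + δ := fun B hB => by
    obtain ⟨h0, h1⟩ := sInf_image_mem_Icc hf B
    obtain ⟨hlo, hhi⟩ := abs_le.1 (hδ B hB)
    nlinarith
  calc lowerSum μ f Q ≤ ∑ B ∈ Q, (sInf (f '' B) * ν B + δ) := sum_le_sum hterm
    _ = lowerSum ν f Q + Q.card * δ := by rw [sum_add_distrib, sum_const, nsmul_eq_mul]; rfl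

namespace IsFinAdditive

variable {μ : Set K → ℝ}

lemma apply_biUnion_finset (hμ : IsFinAdditive μ) {ι : Type*} (s : Finset ι) {g : ι → Set K}
    (hg : (s : Set ι).PairwiseDisjoint g) : μ (⋃ i ∈ s, g i) = ∑ i ∈ s, μ (g i) := by
  induction s using Finset.induction_on with
  | empty => simpa using hμ.1
  | insert a s ha ih =>
    have hdisj : Disjoint (g a) (⋃ i ∈ s, g i) := Set.disjoint_iUnion₂_right.2 fun i hi =>
      hg (by simp) (by simp [hi]) (by rintro rfl; exact ha hi)
    rw [set_biUnion_insert, hμ.2 _ _ hdisj, sum_insert ha, ih (hg.subset (by simp))]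

lemma eq_sum_inter (hμ : IsFinAdditive μ) {Q : Finset (Set K)} (hQ : IsFinPartition Q)
    (A : Set K) : μ A = ∑ B ∈ Q, μ (A ∩ B) := by
  have hA : A = ⋃ B ∈ Q, A ∩ B := by
    ext k
    simpa using fun hk => hQ.exists_mem k
  conv_lhs => rw [hA]
  exact hμ.apply_biUnion_finset Q fun B hB B' hB' hne =>
    (hQ.1 B hB B' hB' hne).mono Set.inter_subset_right Set.inter_subset_right

lemma abs_sub_le_of_refines (hμ : IsFinAdditive μ) {ν : Set K → ℝ} (hν : IsFinAdditive ν)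
    {P Q : Finset (Set K)} (hP : IsFinPartition P) (hQ : IsFinPartition Q) (hQP : Refines Q P)
    {A : Set K} (hA : A ∈ P) {δ : ℝ} (hδ : ∀ B ∈ Q, |μ B - ν B| ≤ δ) :
    |μ A - ν A| ≤ Q.card * δ := by
  have hterm : ∀ B ∈ Q, |μ (A ∩ B) - ν (A ∩ B)| ≤ δ := fun B hB => by
    obtain ⟨A₀, hA₀, hBA₀⟩ := hQP B hB
    by_cases h : A = A₀
    · subst h
      rw [Set.inter_eq_right.2 hBA₀]
      exact hδ B hB
    · rw [hP.inter_eq_empty hA hA₀ hBA₀ h, hμ.1, hν.1, sub_zero, abs_zero]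
      exact (abs_nonneg _).trans (hδ B hB)
  calc |μ A - ν A| = |∑ B ∈ Q, (μ (A ∩ B) - ν (A ∩ B))| := by
        rw [sum_sub_distrib, ← hμ.eq_sum_inter hQ, ← hν.eq_sum_inter hQ]
    _ ≤ ∑ B ∈ Q, |μ (A ∩ B) - ν (A ∩ B)| := abs_sum_le_sum_abs _ _
    _ ≤ Q.card * δ := by simpa using sum_le_sum hterm

lemma sInf_image_mul_le (hμ : IsFinAdditive μ) (hμ0 : ∀ A, 0 ≤ μ A) {f : K → ℝ}
    (hf : BddBelow (Set.range f)) {A C : Set K} (hCA : C ⊆ A) :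
    sInf (f '' A) * μ C ≤ sInf (f '' C) * μ C := by
  rcases C.eq_empty_or_nonempty with rfl | hC
  · simp [hμ.1]
  · exact mul_le_mul_of_nonneg_right
      (csInf_le_csInf (hf.mono (Set.image_subset_range f A)) (hC.image f) (Set.image_mono hCA))
      (hμ0 C)

lemma lowerSum_le_of_refines (hμ : IsFinAdditive μ) (hμ0 : ∀ A, 0 ≤ μ A) {f : K → ℝ}
    (hf : BddBelow (Set.range f)) {Q R : Finset (Set K)} (hR : IsFinPartition R)
    (hQ : IsFinPartition Q) (hQR : Refines Q R) : lowerSum μ f R ≤ lowerSum μ f Q := by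
  let g : Set K → ℝ := fun C => sInf (f '' C) * μ C
  -- a piece `A ∩ B` may be empty: it contributes `sInf ∅ * μ ∅ = 0`
  have hg : g ∅ = 0 := by simp [g, hμ.1]
  calc lowerSum μ f R = ∑ A ∈ R, ∑ B ∈ Q, sInf (f '' A) * μ (A ∩ B) := by
        simp only [lowerSum, ← mul_sum, ← hμ.eq_sum_inter hQ]
    _ ≤ ∑ A ∈ R, ∑ B ∈ Q, g (A ∩ B) := sum_le_sum fun A _ => sum_le_sum fun B _ =>
        hμ.sInf_image_mul_le hμ0 hf Set.inter_subset_left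
    _ = ∑ B ∈ Q, ∑ A ∈ R, g (A ∩ B) := sum_comm
    _ = lowerSum μ f Q := sum_congr rfl fun B hB => by
        obtain ⟨A₀, hA₀, hBA₀⟩ := hQR B hB
        exact hR.sum_inter_eq hg hA₀ hBA₀

end IsFinAdditive

lemma isFinAdditive_filterSum (u : Finset K) (w : K → ℝ) :
    IsFinAdditive fun A => ∑ k ∈ u with k ∈ A, w k := by
  refine ⟨by simp, fun A B hAB => ?_⟩
  have hdisj : Disjoint (u.filter (· ∈ A)) (u.filter (· ∈ B)) :=
    disjoint_filter_filter' u u fun _ hA hB k hk => hAB.ne_of_mem (hA k hk) (hB k hk) rfl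
  rw [← sum_union hdisj]
  simp only [Set.mem_union, filter_or]

lemma isFinAdditive_sampleFreq (u : Finset K) : IsFinAdditive (sampleFreq u) := by
  have h : sampleFreq u = fun A => ∑ k ∈ u with k ∈ A, (u.card : ℝ)⁻¹ := by
    ext A
    simp [sampleFreq, div_eq_mul_inv]
  rw [h]
  exact isFinAdditive_filterSum u _

lemma lowerSum_sampleFreq_le {f : K → ℝ} (hf : BddBelow (Set.range f)) {Q : Finset (Set K)}
    (hQ : IsFinPartition Q) (u : Finset K) :
    lowerSum (sampleFreq u) f Q ≤ (∑ k ∈ u, f k) / u.card := by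
  have hsplit : ∑ k ∈ u, f k = ∑ B ∈ Q, ∑ k ∈ u with k ∈ B, f k := by
    simpa using (isFinAdditive_filterSum u f).eq_sum_inter hQ Set.univ
  rw [hsplit, sum_div]
  refine sum_le_sum fun B _ => ?_
  rw [sampleFreq, ← mul_div_assoc, mul_comm]
  gcongr
  simpa using card_nsmul_le_sum _ f _ fun k hk =>
    csInf_le (hf.mono (Set.image_subset_range f B)) ⟨k, (mem_filter.1 hk).2, rfl⟩

lemma exists_lowerSum_gt {Ξ : Set K → ℝ} {f : K → ℝ} {c : ℝ} (h : c < lowerInt Ξ f) :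
    ∃ R, IsFinPartition R ∧ c < lowerSum Ξ f R := by
  have hne : {x : ℝ | ∃ R, IsFinPartition R ∧ x = lowerSum Ξ f R}.Nonempty :=
    ⟨_, _, IsFinPartition.singleton_univ, rfl⟩
  obtain ⟨_, ⟨R, hR, rfl⟩, hc⟩ := exists_lt_of_lt_csSup hne h
  exact ⟨R, hR, hc⟩

end

theorem stmt16_general {K ι : Type*} (Ξ : Set K → ℝ)
    (h0 : Ξ ∅ = 0)
    (hrange : ∀ A : Set K, Ξ A ∈ Set.Icc (0 : ℝ) 1)
    (hadd : ∀ A B : Set K, Disjoint A B → Ξ (A ∪ B) = Ξ A + Ξ B)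
    (huap : ∀ ε : ℝ, 0 < ε → ∀ P : Finset (Set K), IsFinPartition P →
      ∃ u : Finset K, u.Nonempty ∧ ∀ A ∈ P,
        |((u.filter (fun k => k ∈ A)).card : ℝ) / (u.card : ℝ) - Ξ A| < ε)
    (I : Finset ι) (f : ι → K → ℝ) (hf : ∀ i ∈ I, ∀ k, f i k ∈ Set.Icc (0 : ℝ) 1)
    (ε : ι → ℝ)
    (hint : ∀ i ∈ I, 1 - ε i ≤ lowerInt Ξ (f i))
    (ε' : ℝ) (hε' : 0 < ε') (P : Finset (Set K)) (hP : IsFinPartition P) :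
    ∃ u : Finset K, u.Nonempty ∧
      (∀ A ∈ P, |((u.filter (fun k => k ∈ A)).card : ℝ) / (u.card : ℝ) - Ξ A| < ε') ∧
      ∀ i ∈ I, 1 - ε i - ε' < (∑ k ∈ u, f i k) / (u.card : ℝ) := by
  have hΞ : IsFinAdditive Ξ := ⟨h0, hadd⟩
  choose R hR hRsum using fun i (hi : i ∈ I) =>
    exists_lowerSum_gt ((hint i hi).trans_lt' (by linarith : 1 - ε i - ε' / 2 < 1 - ε i))
  obtain ⟨Q, hQ, hQref⟩ := IsFinPartition.exists_refines
    (insert P (I.attach.image fun i : {i // i ∈ I} => R i i.2))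
    (by simpa using ⟨hP, fun _ i hi h => h ▸ hR i hi⟩)
  set δ := ε' / (2 * (Q.card + 1))
  have hQδ : Q.card * δ < ε' / 2 := by
    rw [mul_div_assoc', div_lt_div_iff₀ (by positivity) two_pos]
    nlinarith
  obtain ⟨u, hu, hfreq⟩ := huap δ (by positivity) Q hQ
  have hclose : ∀ B ∈ Q, |sampleFreq u B - Ξ B| ≤ δ := fun B hB => (hfreq B hB).le
  refine ⟨u, hu, fun A hA => ?_, fun i hi => ?_⟩
  · have hQP := hQref P (Finset.mem_insert_self _ _)
    have := (isFinAdditive_sampleFreq u).abs_sub_le_of_refines hΞ hP hQ hQP hA hclose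
    exact this.trans_lt (by linarith)
  · have hQR : Refines Q (R i hi) := hQref _ <| Finset.mem_insert_of_mem <|
      Finset.mem_image_of_mem _ (Finset.mem_attach _ ⟨i, hi⟩)
    have hbdd : BddBelow (Set.range (f i)) := ⟨0, by rintro _ ⟨k, rfl⟩; exact (hf i hi k).1⟩
    have hclose' : ∀ B ∈ Q, |Ξ B - sampleFreq u B| ≤ δ := fun B hB =>
      abs_sub_comm (Ξ B) _ ▸ hclose B hB
    calc 1 - ε i - ε' < lowerSum Ξ (f i) (R i hi) - ε' / 2 := by linarith [hRsum i hi]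
      _ ≤ lowerSum Ξ (f i) Q - Q.card * δ := by
        linarith [hΞ.lowerSum_le_of_refines (fun A => (hrange A).1) hbdd (hR i hi) hQ hQR]
      _ ≤ lowerSum (sampleFreq u) (f i) Q := by linarith [lowerSum_le_add (hf i hi) hclose']
      _ ≤ (∑ k ∈ u, f i k) / u.card := lowerSum_sampleFreq_le hbdd hQ u

/-- Simultaneous sampling: if `Ξ` is a finitely additive probability measure on `P(K)`
with the uniform approximation property, and `f_i : K → [0,1]` satisfy
`∫ f_i dΞ ≥ 1 − ε_i` for `i` in a finite set `I`, then for any `ε' > 0` and any finite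
partition `P` of `K` there is a nonempty finite `u ⊆ K` approximating all `Ξ(A)`,
`A ∈ P`, within `ε'`, with `(1/|u|)∑_{k∈u} f_i(k) > 1 − ε_i − ε'` for all `i ∈ I`. -/
theorem stmt16 {K ι : Type*} (hK : Nonempty K) (Ξ : Set K → ℝ)
    (h0 : Ξ ∅ = 0) (h1 : Ξ Set.univ = 1)
    (hrange : ∀ A : Set K, Ξ A ∈ Set.Icc (0 : ℝ) 1)
    (hadd : ∀ A B : Set K, Disjoint A B → Ξ (A ∪ B) = Ξ A + Ξ B)
    (huap : ∀ ε : ℝ, 0 < ε → ∀ P : Finset (Set K), IsFinPartition P →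
      ∃ u : Finset K, u.Nonempty ∧ ∀ A ∈ P,
        |((u.filter (fun k => k ∈ A)).card : ℝ) / (u.card : ℝ) - Ξ A| < ε)
    (I : Finset ι) (f : ι → K → ℝ) (hf : ∀ i ∈ I, ∀ k, f i k ∈ Set.Icc (0 : ℝ) 1)
    (ε : ι → ℝ) (hε : ∀ i ∈ I, ε i ∈ Set.Ioo (0 : ℝ) 1)
    (hint : ∀ i ∈ I, 1 - ε i ≤ lowerInt Ξ (f i))
    (ε' : ℝ) (hε' : 0 < ε') (P : Finset (Set K)) (hP : IsFinPartition P) :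
    ∃ u : Finset K, u.Nonempty ∧
      (∀ A ∈ P, |((u.filter (fun k => k ∈ A)).card : ℝ) / (u.card : ℝ) - Ξ A| < ε') ∧
      ∀ i ∈ I, 1 - ε i - ε' < (∑ k ∈ u, f i k) / (u.card : ℝ) :=
  stmt16_general Ξ h0 hrange hadd huap I f hf ε hint ε' hε' P hP
end

section
/- Let C be a nonempty finite set, m > 1 a natural number, I a nonempty finite set, J ⊆ I nonempty, and (A_i)_{i∈I} subsets of C with ‖A_i‖ ≥ 1 + c + 4·log_m L for all i ∈ J, where c ≥ 0, L ≥ 1 and n ≥ 1 are reals/naturals with n² ≤ L². Then the set B = { t' ∈ C : |{ i ∈ J : t' ∈ A_i }| ≥ |J|(1 − 1/n²) } satisfies ‖B‖ ≥ 1 + c + 4·log_m L − 2·log_m n, where ‖X‖ = log_m(|C|/(|C|-|X|)) (with ‖C‖ = ∞). -/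
open scoped Classical

/-!
Let `B` be the set of points lying in all but a `δ`-fraction of the `A i`, `i ∈ J`. Every point of
`C \ B` is missed by more than `δ·|J|` of the sets, so double counting the pairs `(t, i)` with
`t ∉ A i` gives `δ·|J|·|C \ B| ≤ ∑ i ∈ J, |C \ A i| ≤ |J|·|C|·m^(-s)` when every `‖A i‖ ≥ s`.
Hence `|C \ B| ≤ |C|·m^(-s)/δ`, that is `‖B‖ ≥ s + log_m δ`; for `δ = 1/n²` this is
`s - 2·log_m n`.
-/

open Finset Real

section AlmostAllMem

variable {α ι : Type*} [DecidableEq α]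

/-- The set `B_{Ā,g}(δ)` of the paper for the uniform weights `g i = 1/|J|`. -/
noncomputable def almostAllMem (C : Finset α) (J : Finset ι) (A : ι → Finset α) (δ : ℝ) :
    Finset α :=
  C.filter fun t => (#J : ℝ) * (1 - δ) ≤ (#(J.filter fun i => t ∈ A i) : ℝ)

theorem sum_card_filter_not_mem_eq_sum_card_sdiff (C : Finset α) (J : Finset ι)
    (A : ι → Finset α) :
    ∑ t ∈ C, #(J.filter fun i => t ∉ A i) = ∑ i ∈ J, #(C \ A i) := by
  simp_rw [sdiff_eq_filter]
  exact sum_card_bipartiteAbove_eq_sum_card_bipartiteBelow (fun t i => t ∉ A i)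

theorem card_sdiff_almostAllMem_mul_le (C : Finset α) (J : Finset ι) (A : ι → Finset α)
    (δ : ℝ) :
    (#(C \ almostAllMem C J A δ) : ℝ) * (#J * δ) ≤ ∑ i ∈ J, (#(C \ A i) : ℝ) := by
  have hmissed : ∀ t ∈ C \ almostAllMem C J A δ,
      (#J : ℝ) * δ ≤ #(J.filter fun i => t ∉ A i) := by
    intro t ht
    simp only [almostAllMem, mem_sdiff, mem_filter, not_and, not_le] at ht
    have hsplit : (#(J.filter fun i => t ∈ A i) : ℝ) + #(J.filter fun i => t ∉ A i) = #J := by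
      exact_mod_cast card_filter_add_card_filter_not (s := J) (fun i => t ∈ A i)
    linarith [ht.2 ht.1]
  calc (#(C \ almostAllMem C J A δ) : ℝ) * (#J * δ)
      = ∑ _t ∈ C \ almostAllMem C J A δ, (#J : ℝ) * δ := by rw [sum_const, nsmul_eq_mul]
    _ ≤ ∑ t ∈ C \ almostAllMem C J A δ, (#(J.filter fun i => t ∉ A i) : ℝ) :=
      sum_le_sum hmissed
    _ ≤ ∑ t ∈ C, (#(J.filter fun i => t ∉ A i) : ℝ) :=
      sum_le_sum_of_subset_of_nonneg sdiff_subset fun _ _ _ => by positivity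
    _ = ∑ i ∈ J, (#(C \ A i) : ℝ) := by
      exact_mod_cast sum_card_filter_not_mem_eq_sum_card_sdiff C J A

theorem card_sdiff_almostAllMem_mul_le_of_forall_le {C : Finset α} {J : Finset ι}
    {A : ι → Finset α} (δ : ℝ) (hJ : J.Nonempty) {D : ℝ}
    (hD : ∀ i ∈ J, (#(C \ A i) : ℝ) ≤ D) :
    (#(C \ almostAllMem C J A δ) : ℝ) * δ ≤ D := by
  have hcount := (card_sdiff_almostAllMem_mul_le C J A δ).trans (sum_le_card_nsmul J _ D hD)
  rw [nsmul_eq_mul] at hcount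
  refine le_of_mul_le_mul_left ?_ (by exact_mod_cast hJ.card_pos : (0 : ℝ) < #J)
  linarith

end AlmostAllMem

theorem le_logb_card_div_iff {α : Type*} {m : ℕ} (hm : 1 < m) {C X : Finset α} (hX : X ⊂ C)
    (s : ℝ) :
    s ≤ logb m (#C / (#C - #X)) ↔ (#C - #X : ℝ) * m ^ s ≤ #C := by
  have hlt : (#X : ℝ) < #C := by exact_mod_cast card_lt_card hX
  have hd : (0 : ℝ) < #C - #X := sub_pos.mpr hlt
  have hC : (0 : ℝ) < #C := (Nat.cast_nonneg _).trans_lt hlt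
  rw [le_logb_iff_rpow_le (by exact_mod_cast hm) (div_pos hC hd), le_div_iff₀ hd, mul_comm]

theorem card_sdiff_le_of_le_logb {α : Type*} [DecidableEq α] {m : ℕ} (hm : 1 < m)
    {C X : Finset α} (hX : X ⊆ C) {s : ℝ} (h : X = C ∨ s ≤ logb m (#C / (#C - #X))) :
    (#(C \ X) : ℝ) ≤ #C / m ^ s := by
  have hms : (0 : ℝ) < m ^ s := by positivity
  rw [cast_card_sdiff hX]
  rcases hX.eq_or_ssubset with rfl | hXC
  · simp only [sub_self]
    positivity
  · rw [le_div_iff₀ hms, ← le_logb_card_div_iff hm hXC]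
    exact h.resolve_left hXC.ne

theorem almostAllMem_eq_or_add_logb_le {α ι : Type*} [DecidableEq α] {m : ℕ} (hm : 1 < m)
    {C : Finset α} {J : Finset ι} {A : ι → Finset α} (hJ : J.Nonempty)
    (hA : ∀ i ∈ J, A i ⊆ C) {s δ : ℝ} (hδ : 0 < δ)
    (hnorm : ∀ i ∈ J, A i = C ∨ s ≤ logb m (#C / (#C - #(A i)))) :
    almostAllMem C J A δ = C ∨
      s + logb m δ ≤ logb m (#C / (#C - #(almostAllMem C J A δ))) := by
  rcases (show almostAllMem C J A δ ⊆ C from filter_subset _ C).eq_or_ssubset with hB | hB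
  · exact Or.inl hB
  right
  have hm0 : (0 : ℝ) < m := by positivity
  have hcount := card_sdiff_almostAllMem_mul_le_of_forall_le δ hJ fun i hi =>
    card_sdiff_le_of_le_logb hm (hA i hi) (hnorm i hi)
  rw [le_div_iff₀ (by positivity)] at hcount
  rw [le_logb_card_div_iff hm hB, rpow_add hm0, rpow_logb hm0 (by exact_mod_cast hm.ne') hδ,
    ← cast_card_sdiff hB.subset]
  linarith

theorem stmt19_general {α ι : Type*} [DecidableEq α] (C : Finset α)
    (m : ℕ) (hm : 1 < m)
    (J : Finset ι) (hJ : J.Nonempty) (A : ι → Finset α)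
    (hA : ∀ i ∈ J, A i ⊆ C)
    (c : ℝ) (L n : ℕ) (hn : 1 ≤ n)
    (hnorm : ∀ i ∈ J, A i = C ∨
      1 + c + 4 * Real.logb m (L : ℝ) ≤
        Real.logb m ((C.card : ℝ) / ((C.card : ℝ) - ((A i).card : ℝ)))) :
    C.filter (fun t' => (J.card : ℝ) * (1 - 1 / (n : ℝ) ^ 2) ≤
        ((J.filter (fun i => t' ∈ A i)).card : ℝ)) = C ∨
    1 + c + 4 * Real.logb m (L : ℝ) - 2 * Real.logb m (n : ℝ) ≤
      Real.logb m ((C.card : ℝ) / ((C.card : ℝ) -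
        ((C.filter (fun t' => (J.card : ℝ) * (1 - 1 / (n : ℝ) ^ 2) ≤
          ((J.filter (fun i => t' ∈ A i)).card : ℝ))).card : ℝ))) := by
  have hδ : (0 : ℝ) < 1 / (n : ℝ) ^ 2 := by positivity
  have hlogδ : logb m (1 / (n : ℝ) ^ 2) = -(2 * logb m n) := by
    rw [one_div, logb_inv, logb_pow, Nat.cast_ofNat]
  have hB := almostAllMem_eq_or_add_logb_le hm hJ hA hδ hnorm
  rwa [hlogδ, ← sub_eq_add_neg] at hB

/-- Successor-level step of the pseudo-fusion: if `‖A_i‖ ≥ 1 + c + 4·log_m L` for all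
`i ∈ J` (with `‖C‖ = ∞` handled by disjunction) and `n² ≤ L²`, then
`B = {t' ∈ C : |{i ∈ J : t' ∈ A_i}| ≥ |J|(1 − 1/n²)}` satisfies
`‖B‖ ≥ 1 + c + 4·log_m L − 2·log_m n`. -/
theorem stmt19 {α ι : Type*} [DecidableEq α] (C : Finset α) (hC : C.Nonempty)
    (m : ℕ) (hm : 1 < m)
    (I J : Finset ι) (hJI : J ⊆ I) (hJ : J.Nonempty) (A : ι → Finset α)
    (hA : ∀ i ∈ J, A i ⊆ C)
    (c : ℝ) (hc : 0 ≤ c) (L n : ℕ) (hL : 1 ≤ L) (hn : 1 ≤ n) (hnL : n ^ 2 ≤ L ^ 2)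
    (hnorm : ∀ i ∈ J, A i = C ∨
      1 + c + 4 * Real.logb m (L : ℝ) ≤
        Real.logb m ((C.card : ℝ) / ((C.card : ℝ) - ((A i).card : ℝ)))) :
    C.filter (fun t' => (J.card : ℝ) * (1 - 1 / (n : ℝ) ^ 2) ≤
        ((J.filter (fun i => t' ∈ A i)).card : ℝ)) = C ∨
    1 + c + 4 * Real.logb m (L : ℝ) - 2 * Real.logb m (n : ℝ) ≤
      Real.logb m ((C.card : ℝ) / ((C.card : ℝ) -
        ((C.filter (fun t' => (J.card : ℝ) * (1 - 1 / (n : ℝ) ^ 2) ≤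
          ((J.filter (fun i => t' ∈ A i)).card : ℝ))).card : ℝ))) :=
  stmt19_general C m hm J hJ A hA c L n hn hnorm
end
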